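/- arXiv:2106.10049 — 3 statements merged into one kernel-verified Lean document; each statement's English description precedes it below -/
import Mathlib

section
/- Every vertex belonging to a moplex of a graph G is avoidable in G. -/
/-!
Let `X` be a moplex containing `v`, and `a - v - b` an extension of `v`. As `X` is a clique module,
`a` and `b` lie outside `X`, hence in the minimal separator `S = N(X)`, while `v ∉ S`. A minimal
separator has two full components (every vertex of `S` has a neighbour in each), and `v` lies in
at most one of them, so some full component `C` has no vertex in `N[v]`. Through `C`, `a` and `b`
are joined by a walk whose inner vertices lie in `C`; a chordless path extracted from it meets
`N[v]` only in `a` and `b`, and closing it through `v` gives an induced cycle.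
-/

open SimpleGraph

namespace MoplexPaper

variable {V : Type*}

/-- Reachability in `G - S`: a walk from `u` to `v` all of whose vertices avoid `S`. -/
def ReachOutside (G : SimpleGraph V) (S : Set V) (u v : V) : Prop :=
  ∃ p : G.Walk u v, ∀ x ∈ p.support, x ∉ S

/-- `S` is a `u,v`-separator. -/
def IsSeparator (G : SimpleGraph V) (u v : V) (S : Set V) : Prop :=
  ¬ G.Adj u v ∧ u ∉ S ∧ v ∉ S ∧ ¬ ReachOutside G S u v

/-- `S` is a minimal `u,v`-separator. -/
def IsMinSeparator (G : SimpleGraph V) (u v : V) (S : Set V) : Prop :=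
  IsSeparator G u v S ∧ ∀ T ⊂ S, ¬ IsSeparator G u v T

/-- `S` is a minimal separator of `G`. -/
def IsMinimalSeparator (G : SimpleGraph V) (S : Set V) : Prop :=
  ∃ u v, u ≠ v ∧ IsMinSeparator G u v S

/-- The (open) neighbourhood of a set of vertices. -/
def setNbhd (G : SimpleGraph V) (X : Set V) : Set V :=
  {v | v ∉ X ∧ ∃ x ∈ X, G.Adj v x}

/-- The closed neighbourhood of a vertex. -/
def closedNbhd (G : SimpleGraph V) (v : V) : Set V :=
  insert v (G.neighborSet v)

/-- `M` is a module of `G`. -/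
def IsModule (G : SimpleGraph V) (M : Set V) : Prop :=
  ∀ v ∉ M, (∀ x ∈ M, G.Adj v x) ∨ (∀ x ∈ M, ¬ G.Adj v x)

/-- `M` is a clique module of `G`. -/
def IsCliqueModule (G : SimpleGraph V) (M : Set V) : Prop :=
  G.IsClique M ∧ IsModule G M

/-- `X` is a moplex of `G`: an inclusion-maximal clique module whose
neighbourhood is empty or a minimal separator. -/
def IsMoplex (G : SimpleGraph V) (X : Set V) : Prop :=
  X.Nonempty ∧ IsCliqueModule G X ∧
  (∀ Y, X ⊆ Y → IsCliqueModule G Y → Y = X) ∧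
  (setNbhd G X = ∅ ∨ IsMinimalSeparator G (setNbhd G X))

/-- A vertex is moplicial if it belongs to a moplex. -/
def Moplicial (G : SimpleGraph V) (v : V) : Prop := ∃ X, IsMoplex G X ∧ v ∈ X

/-- An extension of `v`: an induced `P₃` with midpoint `v`. -/
def IsExtension (G : SimpleGraph V) (v a b : V) : Prop :=
  a ≠ b ∧ G.Adj v a ∧ G.Adj v b ∧ ¬ G.Adj a b

/-- A cycle is induced if the only edges of `G` among its vertices are its own edges. -/
def IsInducedCycle (G : SimpleGraph V) {w : V} (c : G.Walk w w) : Prop :=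
  c.IsCycle ∧ ∀ x ∈ c.support, ∀ y ∈ c.support, G.Adj x y → s(x, y) ∈ c.edges

/-- `v` is avoidable: every extension of `v` is contained in an induced cycle. -/
def Avoidable (G : SimpleGraph V) (v : V) : Prop :=
  ∀ a b, IsExtension G v a b →
    ∃ (w : V) (c : G.Walk w w), IsInducedCycle G c ∧
      a ∈ c.support ∧ v ∈ c.support ∧ b ∈ c.support

/-- `A` is an asteroidal set of `G`. -/
def IsAsteroidal (G : SimpleGraph V) (A : Set V) : Prop :=
  ∀ a ∈ A, ∀ x ∈ A, ∀ y ∈ A, x ≠ a → y ≠ a →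
    ReachOutside G (closedNbhd G a) x y

/-- `G` is AT-free: it has no asteroidal triple. -/
def ATFree (G : SimpleGraph V) : Prop :=
  ¬ ∃ A : Set V, IsAsteroidal G A ∧ A.ncard = 3

/-- `G` has exactly the two moplexes `U` and `W`. -/
def HasExactlyTwoMoplexes (G : SimpleGraph V) (U W : Set V) : Prop :=
  IsMoplex G U ∧ IsMoplex G W ∧ U ≠ W ∧ ∀ X, IsMoplex G X → X = U ∨ X = W

/-- `G` is not complete. -/
def NonComplete (G : SimpleGraph V) : Prop :=
  ∃ x y : V, x ≠ y ∧ ¬ G.Adj x y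

end MoplexPaper

namespace SimpleGraph.Walk

variable {V : Type*} {G : SimpleGraph V} {a b : V}

theorem isChordless_nil : (nil : G.Walk a a).IsChordless := by
  rw [isChordless_iff_forall_mem_edges]
  intro x y hx hy hxy
  simp only [support_nil, List.mem_singleton] at hx hy
  exact absurd (hx.trans hy.symm) hxy.ne

theorem IsChordless.of_cons {c d : V} {h : G.Adj c d} {q : G.Walk d b}
    (hq : (cons h q).IsChordless) (hc : c ∉ q.support) : q.IsChordless := by
  rw [isChordless_iff_forall_mem_edges] at hq ⊢
  intro x y hx hy hxy
  have hxy' := hq (List.mem_cons_of_mem _ hx) (List.mem_cons_of_mem _ hy) hxy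
  simp only [edges_cons, List.mem_cons, Sym2.eq_iff] at hxy'
  rcases hxy' with (⟨rfl, -⟩ | ⟨-, rfl⟩) | he
  · exact absurd hx hc
  · exact absurd hy hc
  · exact he

theorem IsChordless.cons {u c : V} {q : G.Walk c b} (hq : q.IsChordless) (h : G.Adj u c)
    (hu : ∀ x ∈ q.support, G.Adj u x → x = c) : (cons h q).IsChordless := by
  rw [isChordless_iff_forall_mem_edges] at hq ⊢
  intro x y hx hy hxy
  rw [support_cons, List.mem_cons] at hx hy
  rw [edges_cons, List.mem_cons]
  rcases hx with rfl | hx <;> rcases hy with rfl | hy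
  · exact absurd rfl hxy.ne
  · exact .inl (by rw [hu y hy hxy])
  · exact .inl (by rw [hu x hx hxy.symm, Sym2.eq_swap])
  · exact .inr (hq hx hy hxy)

/-- The path is `a` followed by the part of `q` after the last vertex equal or adjacent to `a`. -/
theorem exists_isPath_isChordless_of_mem_or_adj {c : V} (q : G.Walk c b) (hq : q.IsPath)
    (hqc : q.IsChordless) (ha : ∃ z ∈ q.support, z = a ∨ G.Adj a z) :
    ∃ r : G.Walk a b, r.IsPath ∧ r.IsChordless ∧ r.support ⊆ a :: q.support := by
  induction q with
  | nil =>
    obtain ⟨z, hz, hza⟩ := ha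
    rw [support_nil, List.mem_singleton] at hz
    subst hz
    obtain rfl | hab := hza
    · exact ⟨nil, .nil, isChordless_nil, List.subset_cons_self _ _⟩
    · exact ⟨hab.toWalk, by simpa using hab.ne, hab.isChordless_toWalk, by simp⟩
  | @cons c d b h q ih =>
    rw [cons_isPath_iff] at hq
    by_cases hnear : ∃ z ∈ q.support, z = a ∨ G.Adj a z
    · obtain ⟨r, hr, hrc, hrs⟩ := ih hq.1 (hqc.of_cons hq.2) hnear
      exact ⟨r, hr, hrc,
        List.Subset.trans hrs (List.cons_subset_cons _ (List.subset_cons_self _ _))⟩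
    push Not at hnear
    obtain rfl | hac : c = a ∨ G.Adj a c := by
      obtain ⟨z, hz, hza⟩ := ha
      rcases List.mem_cons.1 hz with rfl | hz
      · exact hza
      · exact absurd hza (not_or.2 (hnear z hz))
    · exact ⟨cons h q, (cons_isPath_iff _ _).2 hq, hqc, List.subset_cons_self _ _⟩
    refine ⟨cons hac (cons h q), ?_, ?_, List.Subset.refl _⟩
    · simp only [cons_isPath_iff, support_cons, List.mem_cons, not_or]
      exact ⟨hq, hac.ne, fun haq => (hnear a haq).1 rfl⟩
    · refine hqc.cons hac fun x hx hax => ?_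
      rcases List.mem_cons.1 hx with rfl | hx
      · rfl
      · exact absurd hax (hnear x hx).2

theorem exists_isPath_isChordless_support_subset (p : G.Walk a b) :
    ∃ r : G.Walk a b, r.IsPath ∧ r.IsChordless ∧ r.support ⊆ p.support := by
  induction p with
  | nil => exact ⟨nil, .nil, isChordless_nil, List.Subset.refl _⟩
  | cons h p ih =>
    obtain ⟨q, hq, hqc, hqp⟩ := ih
    obtain ⟨r, hr, hrc, hrq⟩ :=
      exists_isPath_isChordless_of_mem_or_adj q hq hqc ⟨_, q.start_mem_support, .inr h⟩
    exact ⟨r, hr, hrc, List.Subset.trans hrq (List.cons_subset_cons _ hqp)⟩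

end SimpleGraph.Walk

namespace MoplexPaper

variable {V : Type*}

section

variable {G : SimpleGraph V} {S : Set V} {u v w x y a b s : V}

theorem isInducedCycle_cons_concat {P : G.Walk a b} (hP : P.IsPath) (hPc : P.IsChordless)
    (hva : G.Adj v a) (hbv : G.Adj b v) (hab : a ≠ b) (hvP : v ∉ P.support)
    (hnbr : ∀ x ∈ P.support, G.Adj v x → x = a ∨ x = b) :
    IsInducedCycle G (.cons hva (P.concat hbv)) := by
  refine ⟨(Walk.cons_isCycle_iff _ _).2 ⟨hP.concat hvP hbv, ?_⟩, ?_⟩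
  · rw [Walk.edges_concat, List.concat_eq_append, List.mem_append, List.mem_singleton,
      Sym2.eq_iff]
    rintro (he | ⟨-, rfl⟩ | ⟨-, rfl⟩)
    · exact hvP (P.fst_mem_support_of_mem_edges he)
    · exact hva.ne rfl
    · exact hab rfl
  · have hmem : ∀ x ∈ (Walk.cons hva (P.concat hbv)).support, x = v ∨ x ∈ P.support := by
      simp only [Walk.support_cons, Walk.support_concat, List.mem_cons, List.mem_append]
      tauto
    have hspoke :
        ∀ y ∈ P.support, G.Adj v y → s(v, y) ∈ (Walk.cons hva (P.concat hbv)).edges := by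
      intro y hy hvy
      simp only [Walk.edges_cons, Walk.edges_concat, List.concat_eq_append, List.mem_cons,
        List.mem_append]
      rcases hnbr y hy hvy with rfl | rfl
      · exact .inl rfl
      · exact .inr (.inr (.inl Sym2.eq_swap))
    intro x hx y hy hxy
    rcases hmem x hx with rfl | hxP <;> rcases hmem y hy with rfl | hyP
    · exact absurd rfl hxy.ne
    · exact hspoke y hyP hxy
    · exact Sym2.eq_swap ▸ hspoke x hxP hxy.symm
    · simp only [Walk.edges_cons, Walk.edges_concat, List.concat_eq_append, List.mem_cons,
        List.mem_append]
      exact .inr (.inl (hPc.mem_edges hxP hyP hxy))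

theorem ReachOutside.refl (hu : u ∉ S) : ReachOutside G S u u :=
  ⟨.nil, by simpa using hu⟩

theorem ReachOutside.symm (h : ReachOutside G S u v) : ReachOutside G S v u := by
  obtain ⟨p, hp⟩ := h
  exact ⟨p.reverse, fun x hx => hp x (by simpa using hx)⟩

theorem ReachOutside.trans (huv : ReachOutside G S u v) (hvw : ReachOutside G S v w) :
    ReachOutside G S u w := by
  obtain ⟨p, hp⟩ := huv
  obtain ⟨q, hq⟩ := hvw
  exact ⟨p.append q, fun x hx => ((p.mem_support_append_iff q).1 hx).elim (hp x) (hq x)⟩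

theorem ReachOutside.concat (h : ReachOutside G S u x) (hxy : G.Adj x y) (hy : y ∉ S) :
    ReachOutside G S u y := by
  obtain ⟨p, hp⟩ := h
  refine ⟨p.concat hxy, fun z hz => ?_⟩
  rw [Walk.support_concat, List.mem_append, List.mem_singleton] at hz
  rcases hz with hz | rfl
  · exact hp z hz
  · exact hy

theorem reachOutside_of_mem_support {p : G.Walk x y} (hp : ∀ z ∈ p.support, z ∉ S)
    (hw : w ∈ p.support) : ReachOutside G S x w := by
  classical
  exact ⟨p.takeUntil w hw, fun z hz => hp z (p.support_takeUntil_subset_support hw hz)⟩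

theorem exists_reachOutside_adj_of_mem_support (p : G.Walk x y) (hx : x ∉ S)
    (hw : w ∈ p.support) (hwS : w ∈ S) :
    ∃ z s, s ∈ p.support ∧ s ∈ S ∧ ReachOutside G S x z ∧ G.Adj z s := by
  induction p with
  | nil =>
    rw [Walk.support_nil, List.mem_singleton] at hw
    exact absurd (hw ▸ hwS) hx
  | @cons x x' y h p ih =>
    by_cases hx' : x' ∈ S
    · exact ⟨x, x', by simp, hx', .refl hx, h⟩
    rcases List.mem_cons.1 hw with rfl | hw
    · exact absurd hwS hx
    obtain ⟨z, s, hs, hsS, hx'z, hzs⟩ := ih hx' hw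
    exact ⟨z, s, List.mem_cons_of_mem _ hs, hsS,
      ((ReachOutside.refl hx).concat h hx').trans hx'z, hzs⟩

theorem IsSeparator.symm (h : IsSeparator G u w S) : IsSeparator G w u S :=
  ⟨fun h' => h.1 h'.symm, h.2.2.1, h.2.1, fun h' => h.2.2.2 h'.symm⟩

theorem IsMinSeparator.symm (h : IsMinSeparator G u w S) : IsMinSeparator G w u S :=
  ⟨h.1.symm, fun T hT hsep => h.2 T hT hsep.symm⟩

/-- `u` lies in a full component of `G - S`. -/
def InFullComponent (G : SimpleGraph V) (S : Set V) (u : V) : Prop :=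
  ∀ s ∈ S, ∃ x, ReachOutside G S u x ∧ G.Adj x s

theorem IsMinSeparator.inFullComponent (h : IsMinSeparator G u w S) : InFullComponent G S u := by
  intro s hs
  obtain ⟨⟨huw, hu, hw, hsep⟩, hmin⟩ := h
  obtain ⟨p, hp⟩ : ReachOutside G (S \ {s}) u w := by
    by_contra hr
    exact hmin _ (Set.sdiff_singleton_ssubset.2 hs) ⟨huw, fun h => hu h.1, fun h => hw h.1, hr⟩
  obtain ⟨t, ht, htS⟩ : ∃ t ∈ p.support, t ∈ S := by
    by_contra! hpS
    exact hsep ⟨p, hpS⟩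
  obtain ⟨x, s', hs', hs'S, hux, hxs'⟩ := exists_reachOutside_adj_of_mem_support p hu ht htS
  obtain rfl : s' = s := by
    by_contra hne
    exact hp s' hs' ⟨hs'S, hne⟩
  exact ⟨x, hux, hxs'⟩

theorem IsMinimalSeparator.exists_inFullComponent_not_reachOutside (h : IsMinimalSeparator G S)
    (v : V) : ∃ u, InFullComponent G S u ∧ ¬ ReachOutside G S u v := by
  obtain ⟨u, w, -, huw⟩ := h
  by_cases hu : ReachOutside G S u v
  · exact ⟨w, huw.symm.inFullComponent, fun hw => huw.1.2.2.2 (hu.trans hw.symm)⟩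
  · exact ⟨u, huw.inFullComponent, hu⟩

theorem InFullComponent.exists_walk (hu : InFullComponent G S u) (ha : a ∈ S) (hb : b ∈ S) :
    ∃ p : G.Walk a b, ∀ y ∈ p.support, y = a ∨ y = b ∨ ReachOutside G S u y := by
  obtain ⟨xa, huxa, hxaa⟩ := hu a ha
  obtain ⟨xb, huxb, hxbb⟩ := hu b hb
  obtain ⟨q, hq⟩ := huxa.symm.trans huxb
  refine ⟨.cons hxaa.symm (q.concat hxbb), fun y hy => ?_⟩
  rw [Walk.support_cons, Walk.support_concat, List.mem_cons, List.mem_append,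
    List.mem_singleton] at hy
  rcases hy with rfl | hy | rfl
  · exact .inl rfl
  · exact .inr (.inr (huxa.trans (reachOutside_of_mem_support hq hy)))
  · exact .inr (.inl rfl)

theorem IsMinimalSeparator.exists_isInducedCycle (hS : IsMinimalSeparator G S) (hv : v ∉ S)
    (ha : a ∈ S) (hb : b ∈ S) (hab : a ≠ b) (hva : G.Adj v a) (hvb : G.Adj v b) :
    ∃ (w : V) (c : G.Walk w w), IsInducedCycle G c ∧
      a ∈ c.support ∧ v ∈ c.support ∧ b ∈ c.support := by
  obtain ⟨u, hu, huv⟩ := hS.exists_inFullComponent_not_reachOutside v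
  obtain ⟨W, hW⟩ := hu.exists_walk ha hb
  obtain ⟨P, hP, hPc, hPW⟩ := W.exists_isPath_isChordless_support_subset
  have hnbr : ∀ y ∈ P.support, G.Adj v y → y = a ∨ y = b := by
    intro y hy hvy
    rcases hW y (hPW hy) with rfl | rfl | huy
    · exact .inl rfl
    · exact .inr rfl
    · exact absurd (huy.concat hvy.symm hv) huv
  have hvP : v ∉ P.support := by
    intro hvP
    rcases hW v (hPW hvP) with rfl | rfl | huv'
    · exact hva.ne rfl
    · exact hvb.ne rfl
    · exact huv huv'
  exact ⟨v, _, isInducedCycle_cons_concat hP hPc hva hvb.symm hab hvP hnbr, by simp⟩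

theorem IsExtension.symm (h : IsExtension G v a b) : IsExtension G v b a :=
  ⟨h.1.symm, h.2.2.1, h.2.1, fun h' => h.2.2.2 h'.symm⟩

theorem IsCliqueModule.notMem_of_isExtension {X : Set V} (hX : IsCliqueModule G X) (hv : v ∈ X)
    (h : IsExtension G v a b) : a ∉ X := by
  obtain ⟨hab, hva, hvb, hnab⟩ := h
  intro haX
  by_cases hbX : b ∈ X
  · exact hnab (hX.1 haX hbX hab)
  rcases hX.2 b hbX with hall | hnone
  · exact hnab (hall a haX).symm
  · exact hnone v hv hvb.symm

theorem IsCliqueModule.mem_setNbhd_of_isExtension {X : Set V} (hX : IsCliqueModule G X)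
    (hv : v ∈ X) (h : IsExtension G v a b) : a ∈ setNbhd G X ∧ b ∈ setNbhd G X :=
  ⟨⟨hX.notMem_of_isExtension hv h, v, hv, h.2.1.symm⟩,
    ⟨hX.notMem_of_isExtension hv h.symm, v, hv, h.2.2.1.symm⟩⟩

end

theorem moplicial_avoidable_general {V : Type*} (G : SimpleGraph V) (v : V)
    (h : Moplicial G v) : Avoidable G v := by
  obtain ⟨X, ⟨-, hX, -, hN⟩, hvX⟩ := h
  intro a b hext
  obtain ⟨ha, hb⟩ := hX.mem_setNbhd_of_isExtension hvX hext
  have hS : IsMinimalSeparator G (setNbhd G X) :=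
    hN.resolve_left (Set.nonempty_of_mem ha).ne_empty
  exact hS.exists_isInducedCycle (fun hv => hv.1 hvX) ha hb hext.1 hext.2.1 hext.2.2.1

/-- Every moplicial vertex of a graph is avoidable. -/
theorem moplicial_avoidable {V : Type*} [Fintype V] (G : SimpleGraph V) (v : V)
    (h : Moplicial G v) : Avoidable G v :=
  moplicial_avoidable_general G v h

end MoplexPaper
end

section
/- If a graph G has an asteroidal set of size k, then G has an asteroidal set of size k all of whose vertices are moplicial. Consequently, the asteroidal number of G is at most the number of moplexes of G. -/
open SimpleGraph

namespace MoplexPaper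

variable {V : Type*}

/-!
Fix `a ∈ A`. The rest of `A` lies in one component `C` of `G - N[a]`; put `S = N(C) ⊆ N(a)` and
let `D` be the component of `a` in `G - S`. Every vertex of `N(D) ⊆ S` has a neighbour in `C`,
and a region `D` with such a full component opposite it always contains a moplex, by induction
on `|D|`. If `D` is a clique completely joined to `N(D)`, it is itself a moplex. Otherwise pick a
non-edge `w y` with `y ∈ D` and `w ∈ N(D)`, or, when `N(D)` is completely joined to `D`, with
`w ∈ D`; the component of `y` in `D - N[w]` is then a smaller region of the same kind, with a
full opposite component containing `w`.
A vertex `x` of a moplex inside `D` can replace `a`: `N[x]` misses `C`, and `N[b]` misses `D` for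
every `b ∈ A \ {a}`. Repeating this makes every vertex moplicial, and the vertices of an
asteroidal set are pairwise non-adjacent, so they lie in distinct moplexes.
-/

section

variable {G : SimpleGraph V}

def ReachWithin (G : SimpleGraph V) (R : Set V) (u v : V) : Prop :=
  ∃ p : G.Walk u v, ∀ x ∈ p.support, x ∈ R

theorem reachOutside_iff_reachWithin {S : Set V} {u v : V} :
    ReachOutside G S u v ↔ ReachWithin G Sᶜ u v := Iff.rfl

namespace ReachWithin

variable {R R' : Set V} {u v w : V}

theorem refl (hu : u ∈ R) : ReachWithin G R u u := ⟨.nil, by simpa using hu⟩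

theorem mem_left (h : ReachWithin G R u v) : u ∈ R :=
  let ⟨p, hp⟩ := h; hp u p.start_mem_support

theorem mem_right (h : ReachWithin G R u v) : v ∈ R :=
  let ⟨p, hp⟩ := h; hp v p.end_mem_support

theorem symm (h : ReachWithin G R u v) : ReachWithin G R v u :=
  let ⟨p, hp⟩ := h; ⟨p.reverse, fun x hx => hp x (by simpa using hx)⟩

theorem trans (h₁ : ReachWithin G R u v) (h₂ : ReachWithin G R v w) : ReachWithin G R u w := by
  obtain ⟨p, hp⟩ := h₁
  obtain ⟨q, hq⟩ := h₂
  refine ⟨p.append q, fun x hx => ?_⟩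
  rcases (Walk.mem_support_append_iff _ _).1 hx with hx | hx
  exacts [hp x hx, hq x hx]

theorem of_adj (hu : u ∈ R) (hv : v ∈ R) (h : G.Adj u v) : ReachWithin G R u v :=
  ⟨h.toWalk, by simp [hu, hv]⟩

theorem step (h : ReachWithin G R u v) (hw : w ∈ R) (hvw : G.Adj v w) : ReachWithin G R u w :=
  h.trans (of_adj h.mem_right hw hvw)

theorem mono (hR : R ⊆ R') (h : ReachWithin G R u v) : ReachWithin G R' u v :=
  let ⟨p, hp⟩ := h; ⟨p, fun x hx => hR (hp x hx)⟩

theorem mem_of_closed {P : Set V} (h : ReachWithin G R u v) (hu : u ∈ P)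
    (hP : ∀ a b, a ∈ P → a ∈ R → b ∈ R → G.Adj a b → b ∈ P) : v ∈ P := by
  obtain ⟨p, hp⟩ := h
  induction p with
  | nil => exact hu
  | cons hab q ih =>
    exact ih (hP _ _ hu (hp _ (by simp)) (hp _ (by simp)) hab)
      (fun x hx => hp x (by simp [hx]))

theorem mem_iff_of_compl_setNbhd {C : Set V} (h : ReachWithin G (setNbhd G C)ᶜ u v) :
    u ∈ C ↔ v ∈ C := by
  have closed : ∀ a b, a ∈ C → a ∈ (setNbhd G C)ᶜ → b ∈ (setNbhd G C)ᶜ → G.Adj a b → b ∈ C :=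
    fun a b ha _ hb hab => by_contra fun hbC => hb ⟨hbC, a, ha, hab.symm⟩
  exact ⟨fun hu => h.mem_of_closed hu closed, fun hv => h.symm.mem_of_closed hv closed⟩

end ReachWithin

def componentIn (G : SimpleGraph V) (R : Set V) (u : V) : Set V := {v | ReachWithin G R u v}

section componentIn

variable {R : Set V} {u v w : V}

theorem componentIn_subset : componentIn G R u ⊆ R := fun _ h => ReachWithin.mem_right h

theorem mem_componentIn_self (hu : u ∈ R) : u ∈ componentIn G R u := .refl hu

theorem reachWithin_componentIn (hv : v ∈ componentIn G R u) (hw : w ∈ componentIn G R u) :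
    ReachWithin G (componentIn G R u) v w := by
  classical
  have from_root : ∀ {x}, x ∈ componentIn G R u → ReachWithin G (componentIn G R u) u x := by
    rintro x ⟨p, hp⟩
    exact ⟨p, fun y hy =>
      ⟨p.takeUntil y hy, fun y' hy' => hp y' (p.support_takeUntil_subset_support hy hy')⟩⟩
  exact (from_root hv).symm.trans (from_root hw)

theorem setNbhd_componentIn_subset : setNbhd G (componentIn G R u) ⊆ Rᶜ :=
  fun _ ⟨htD, _, hd, htd⟩ htR => htD (ReachWithin.step hd htR htd.symm)

end componentIn

theorem mem_closedNbhd {a v : V} : v ∈ closedNbhd G a ↔ v = a ∨ G.Adj a v := Iff.rfl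

theorem mem_closedNbhd_comm {a v : V} : v ∈ closedNbhd G a ↔ a ∈ closedNbhd G v := by
  simp only [mem_closedNbhd, eq_comm, G.adj_comm]

theorem closedNbhd_subset_union_setNbhd {C : Set V} {c : V} (hc : c ∈ C) :
    closedNbhd G c ⊆ C ∪ setNbhd G C := by
  rintro v (rfl | hcv)
  · exact Or.inl hc
  · by_cases hv : v ∈ C
    exacts [Or.inl hv, Or.inr ⟨hv, c, hc, hcv.symm⟩]

theorem union_setNbhd_subset {C D : Set V} (h : D ⊆ C) :
    D ∪ setNbhd G D ⊆ C ∪ setNbhd G C := by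
  rintro v (hv | ⟨-, d, hd, hvd⟩)
  · exact Or.inl (h hv)
  · by_cases hv : v ∈ C
    exacts [Or.inl hv, Or.inr ⟨hv, d, h hd, hvd⟩]

theorem notMem_union_setNbhd {D : Set V} {w : V} (h : ∀ d ∈ D, d ∉ closedNbhd G w) :
    w ∉ D ∪ setNbhd G D := by
  rintro (hw | ⟨-, d, hd, hwd⟩)
  exacts [h w hw (Set.mem_insert w _), h d hd (Or.inr hwd)]

/-- The component of `z` in `G - (C ∪ N(C))` is full, i.e. adjacent to every vertex of `N(C)`.
Vacuous when `N(C) = ∅`. -/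
def FullOpposite (G : SimpleGraph V) (C : Set V) (z : V) : Prop :=
  ∀ s ∈ setNbhd G C, ∃ z', G.Adj s z' ∧ ReachWithin G (C ∪ setNbhd G C)ᶜ z z'

theorem isModule_of_forall_setNbhd_adj {C : Set V}
    (hfull : ∀ s ∈ setNbhd G C, ∀ c ∈ C, G.Adj s c) : IsModule G C := by
  intro v hv
  by_cases hvS : v ∈ setNbhd G C
  · exact Or.inl fun x hx => hfull v hvS x hx
  · exact Or.inr fun x hx hvx => hvS ⟨hv, x, hx, hvx⟩

namespace FullOpposite

variable {C D : Set V} {z : V}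

theorem eq_of_isCliqueModule (hz : FullOpposite G C z) {c : V} (hc : c ∈ C) {Y : Set V}
    (hCY : C ⊆ Y) (hY : IsCliqueModule G Y) : Y = C := by
  refine (Set.Subset.antisymm (fun y hy => by_contra fun hyC => ?_) hCY)
  have hyS : y ∈ setNbhd G C := ⟨hyC, c, hc, hY.1 hy (hCY hc) (by rintro rfl; exact hyC hc)⟩
  obtain ⟨z', hyz', hzz'⟩ := hz y hyS
  have hz'C : z' ∉ C ∪ setNbhd G C := hzz'.mem_right
  have hz'c : G.Adj z' c := by
    by_cases hz'Y : z' ∈ Y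
    · exact hY.1 hz'Y (hCY hc) (by rintro rfl; exact hz'C (Or.inl hc))
    · exact (hY.2 z' hz'Y).elim (fun hall => hall c (hCY hc))
        (fun hnone => absurd hyz'.symm (hnone y hy))
  exact hz'C (Or.inr ⟨fun h => hz'C (Or.inl h), c, hc, hz'c⟩)

theorem isMinimalSeparator (hz : FullOpposite G C z) {c : V} (hc : c ∈ C)
    (hfull : ∀ s ∈ setNbhd G C, ∀ c ∈ C, G.Adj s c) (hS : (setNbhd G C).Nonempty) :
    IsMinimalSeparator G (setNbhd G C) := by
  obtain ⟨s, hs⟩ := hS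
  obtain ⟨_, -, hzz'⟩ := hz s hs
  have hzC : z ∉ C ∪ setNbhd G C := hzz'.mem_left
  have hcS : c ∉ setNbhd G C := fun h => h.1 hc
  refine ⟨c, z, by rintro rfl; exact hzC (Or.inl hc), ⟨?_, hcS, fun h => hzC (Or.inr h), ?_⟩, ?_⟩
  · exact fun hcz => hzC (Or.inr ⟨fun h => hzC (Or.inl h), c, hc, hcz.symm⟩)
  · exact fun h => hzC (Or.inl ((reachOutside_iff_reachWithin.1 h).mem_iff_of_compl_setNbhd.1 hc))
  · intro T hT hsep
    obtain ⟨t, ht, htT⟩ := Set.exists_of_ssubset hT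
    obtain ⟨z', htz', hzz'⟩ := hz t ht
    have hout : (C ∪ setNbhd G C)ᶜ ⊆ Tᶜ :=
      Set.compl_subset_compl.2 (hT.subset.trans Set.subset_union_right)
    apply hsep.2.2.2
    rw [reachOutside_iff_reachWithin]
    have hcT : c ∈ Tᶜ := fun h => hcS (hT.subset h)
    exact ((ReachWithin.of_adj hcT htT (hfull t ht c hc).symm).step (hout hzz'.mem_right)
      htz').trans (hzz'.symm.mono hout)

theorem isMoplex (hz : FullOpposite G C z) (hC : C.Nonempty) (hclique : G.IsClique C)
    (hfull : ∀ s ∈ setNbhd G C, ∀ c ∈ C, G.Adj s c) : IsMoplex G C := by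
  obtain ⟨c, hc⟩ := hC
  exact ⟨⟨c, hc⟩, ⟨hclique, isModule_of_forall_setNbhd_adj hfull⟩,
    fun _ hCY hY => hz.eq_of_isCliqueModule hc hCY hY,
    (setNbhd G C).eq_empty_or_nonempty.imp_right (hz.isMinimalSeparator hc hfull)⟩

theorem of_subset (hz : FullOpposite G C z) (hDC : D ⊆ C) {w : V}
    (hw : ReachWithin G (D ∪ setNbhd G D)ᶜ z w)
    (hN : ∀ t ∈ setNbhd G D, t ∈ setNbhd G C ∨ G.Adj t w) : FullOpposite G D z := by
  intro t ht
  rcases hN t ht with htS | htw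
  · obtain ⟨z', htz', hzz'⟩ := hz t htS
    exact ⟨z', htz', hzz'.mono (Set.compl_subset_compl.2 (union_setNbhd_subset hDC))⟩
  · exact ⟨w, htw, hw⟩

end FullOpposite

theorem fullOpposite_of_forall_adj {D : Set V} {w : V} (hw : w ∉ D ∪ setNbhd G D)
    (h : ∀ t ∈ setNbhd G D, G.Adj t w) : FullOpposite G D w :=
  fun t ht => ⟨w, h t ht, .refl hw⟩

theorem mem_setNbhd_or_adj_of_mem_setNbhd_componentIn {C : Set V} {w y t : V}
    (ht : t ∈ setNbhd G (componentIn G (C \ closedNbhd G w) y)) :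
    t ∈ setNbhd G C ∨ G.Adj t w := by
  obtain ⟨htD, d, hd, htd⟩ := ht
  obtain ⟨hdC, hdw⟩ := componentIn_subset hd
  by_cases htC : t ∈ C
  · right
    have htw : t ∈ closedNbhd G w := by_contra fun h => htD (ReachWithin.step hd ⟨htC, h⟩ htd.symm)
    rcases mem_closedNbhd.1 htw with rfl | hwt
    exacts [absurd (Or.inr htd) hdw, hwt.symm]
  · exact Or.inl ⟨htC, d, hdC, htd⟩

theorem FullOpposite.exists_isMoplex_subset [Finite V] {C : Set V} {z : V}
    (hz : FullOpposite G C z) (hC : C.Nonempty) : ∃ X ⊆ C, IsMoplex G X := by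
  induction C using WellFoundedLT.induction generalizing z with
  | ind C ih =>
  have hDC : ∀ {w y}, componentIn G (C \ closedNbhd G w) y ⊆ C :=
    fun hv => (componentIn_subset hv).1
  have hwD : ∀ {w y}, w ∉ componentIn G (C \ closedNbhd G w) y ∪
      setNbhd G (componentIn G (C \ closedNbhd G w) y) :=
    notMem_union_setNbhd fun _ hd => (componentIn_subset hd).2
  have descend : ∀ w y z', y ∈ C → y ∉ closedNbhd G w → (∃ c ∈ C, c ∈ closedNbhd G w) →
      FullOpposite G (componentIn G (C \ closedNbhd G w) y) z' → ∃ X ⊆ C, IsMoplex G X := by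
    rintro w y z' hy hyw ⟨c, hc, hcw⟩ hz'
    have hlt : componentIn G (C \ closedNbhd G w) y < C :=
      (Set.ssubset_iff_of_subset hDC).2 ⟨c, hc, fun h => (componentIn_subset h).2 hcw⟩
    obtain ⟨X, hXD, hX⟩ := ih _ hlt hz' ⟨y, mem_componentIn_self ⟨hy, hyw⟩⟩
    exact ⟨X, hXD.trans hDC, hX⟩
  by_cases hfull : ∀ s ∈ setNbhd G C, ∀ c ∈ C, G.Adj s c
  · by_cases hclique : G.IsClique C
    · exact ⟨C, subset_rfl, hz.isMoplex hC hclique hfull⟩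
    obtain ⟨x, hx, y, hy, hxy, hnadj⟩ : ∃ x ∈ C, ∃ y ∈ C, x ≠ y ∧ ¬ G.Adj x y := by
      simpa [SimpleGraph.IsClique, Set.Pairwise] using hclique
    refine descend x y x hy (by rintro (rfl | h); exacts [hxy rfl, hnadj h])
      ⟨x, hx, Set.mem_insert x _⟩ (fullOpposite_of_forall_adj hwD fun t ht => ?_)
    exact (mem_setNbhd_or_adj_of_mem_setNbhd_componentIn ht).elim (hfull t · x hx) id
  · push Not at hfull
    obtain ⟨s, hs, c, hc, hsc⟩ := hfull
    obtain ⟨z', hsz', hzz'⟩ := hz s hs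
    have hzs : ReachWithin G (componentIn G (C \ closedNbhd G s) c ∪
        setNbhd G (componentIn G (C \ closedNbhd G s) c))ᶜ z s :=
      (hzz'.mono (Set.compl_subset_compl.2 (union_setNbhd_subset hDC))).step hwD hsz'.symm
    refine descend s c z hc (by rintro (rfl | h); exacts [hs.1 hc, hsc h]) ?_
      (hz.of_subset hDC hzs fun t ht => mem_setNbhd_or_adj_of_mem_setNbhd_componentIn ht)
    obtain ⟨c₁, hc₁, hsc₁⟩ := hs.2
    exact ⟨c₁, hc₁, Or.inr hsc₁⟩

namespace IsAsteroidal

variable {A : Set V} {a : V}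

theorem notMem_closedNbhd (hA : IsAsteroidal G A) (ha : a ∈ A) {b : V} (hb : b ∈ A)
    (hba : b ≠ a) : b ∉ closedNbhd G a :=
  let ⟨p, hp⟩ := hA a ha b hb b hb hba hba; hp b p.start_mem_support

theorem insert_sdiff (hA : IsAsteroidal G A) (ha : a ∈ A) {x : V}
    (hax : ∀ b ∈ A \ {a}, ReachOutside G (closedNbhd G b) a x)
    (hx : ∀ b ∈ A \ {a}, ∀ b' ∈ A \ {a}, ReachOutside G (closedNbhd G x) b b') :
    IsAsteroidal G (insert x (A \ {a})) := by
  rintro w (rfl | hw) p hp q hq hpw hqw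
  · exact hx p (hp.resolve_left hpw) q (hq.resolve_left hqw)
  have via_a : ∀ r ∈ insert x (A \ {a}), r ≠ w → ReachWithin G (closedNbhd G w)ᶜ r a := by
    rintro r (rfl | hr) hrw
    exacts [(reachOutside_iff_reachWithin.1 (hax w hw)).symm,
      hA w hw.1 r hr.1 a ha hrw (Ne.symm hw.2)]
  exact (via_a p hp hpw).trans (via_a q hq hqw).symm

theorem exists_moplicial_replacement [Finite V] (hA : IsAsteroidal G A) (ha : a ∈ A) :
    ∃ x, Moplicial G x ∧ x ∉ A \ {a} ∧ IsAsteroidal G (insert x (A \ {a})) := by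
  rcases (A \ {a}).eq_empty_or_nonempty with hB | ⟨b₀, hb₀⟩
  · have huniv : FullOpposite G Set.univ a := fun s hs => (hs.1 (Set.mem_univ s)).elim
    obtain ⟨X, -, hX⟩ := huniv.exists_isMoplex_subset ⟨a, trivial⟩
    obtain ⟨x, hx⟩ := hX.1
    exact ⟨x, ⟨X, hX, hx⟩, by simp [hB], hA.insert_sdiff ha (by simp [hB]) (by simp [hB])⟩
  set C := componentIn G (closedNbhd G a)ᶜ b₀
  set D := componentIn G (setNbhd G C)ᶜ a
  have hBC : A \ {a} ⊆ C := fun b hb => hA a ha b₀ hb₀.1 b hb.1 hb₀.2 hb.2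
  have haC : a ∉ C ∪ setNbhd G C := notMem_union_setNbhd fun _ hc => componentIn_subset hc
  have haD : a ∈ D := mem_componentIn_self fun h => haC (Or.inr h)
  have hDC : ∀ d ∈ D, d ∉ C ∪ setNbhd G C := by
    rintro d hd (hdC | hdS)
    · exact haC (Or.inl ((hd : ReachWithin G _ a d).mem_iff_of_compl_setNbhd.2 hdC))
    · exact componentIn_subset hd hdS
  have hNDC : setNbhd G D ⊆ setNbhd G C := fun _ ht => not_not.1 (setNbhd_componentIn_subset ht)
  have hD : FullOpposite G D b₀ := by
    intro t ht
    obtain ⟨-, c, hc, htc⟩ := hNDC ht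
    refine ⟨c, htc, (reachWithin_componentIn (hBC hb₀) hc).mono ?_⟩
    rintro v hvC (hvD | hvN)
    · exact hDC v hvD (Or.inl hvC)
    · exact (hNDC hvN).1 hvC
  obtain ⟨X, hXD, hX⟩ := hD.exists_isMoplex_subset ⟨a, haD⟩
  obtain ⟨x, hx⟩ := hX.1
  have hxD := hXD hx
  have hax : ∀ b ∈ A \ {a}, ReachOutside G (closedNbhd G b) a x := fun b hb =>
    (reachWithin_componentIn haD hxD).mono
      fun d hd hdb => hDC d hd (closedNbhd_subset_union_setNbhd (hBC hb) hdb)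
  have hxB : ∀ b ∈ A \ {a}, ∀ b' ∈ A \ {a}, ReachOutside G (closedNbhd G x) b b' :=
    fun b hb b' hb' => (reachWithin_componentIn (hBC hb) (hBC hb')).mono
      fun c hc hcx => hDC x hxD (closedNbhd_subset_union_setNbhd hc (mem_closedNbhd_comm.1 hcx))
  refine ⟨x, ⟨X, hX, hx⟩, fun h => ?_, hA.insert_sdiff ha hax hxB⟩
  exact (reachOutside_iff_reachWithin.1 (hxB x h x h)).mem_left (Set.mem_insert x _)

theorem exists_forall_moplicial [Finite V] (hA : IsAsteroidal G A) :
    ∃ A', IsAsteroidal G A' ∧ A'.ncard = A.ncard ∧ ∀ a ∈ A', Moplicial G a := by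
  induction hn : {a ∈ A | ¬ Moplicial G a}.ncard generalizing A with
  | zero =>
    refine ⟨A, hA, rfl, fun a ha => by_contra fun h => ?_⟩
    exact ((Set.ncard_eq_zero (Set.toFinite _)).1 hn).subset ⟨ha, h⟩
  | succ n ih =>
    obtain ⟨a, ha, hna⟩ :=
      Set.nonempty_of_ncard_ne_zero (s := {a ∈ A | ¬ Moplicial G a}) (by omega)
    obtain ⟨x, hx, hxB, hAx⟩ := hA.exists_moplicial_replacement ha
    have hbad : {b ∈ insert x (A \ {a}) | ¬ Moplicial G b} = {b ∈ A | ¬ Moplicial G b} \ {a} := by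
      ext b
      by_cases hb : b = x
      · subst hb; simp [hx]
      · simp [hb, and_right_comm]
    obtain ⟨A', hA', hcard, hmop⟩ :=
      ih hAx (by rw [hbad, Set.ncard_sdiff_singleton_of_mem (show a ∈ {b ∈ A | ¬ Moplicial G b}
        from ⟨ha, hna⟩), hn, Nat.add_sub_cancel])
    refine ⟨A', hA', ?_, hmop⟩
    rw [hcard, Set.ncard_insert_of_notMem hxB, Set.ncard_sdiff_singleton_of_mem ha]
    have := (Set.ncard_pos (Set.toFinite _)).2 ⟨a, ha⟩
    omega

theorem ncard_le_ncard_isMoplex [Finite V] (hA : IsAsteroidal G A)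
    (hmop : ∀ a ∈ A, Moplicial G a) : A.ncard ≤ {X : Set V | IsMoplex G X}.ncard := by
  choose! f hf hmem using hmop
  refine Set.ncard_le_ncard_of_injOn f hf fun a ha b hb hab => by_contra fun hne => ?_
  exact hA.notMem_closedNbhd ha hb (Ne.symm hne)
    (Or.inr ((hf a ha).2.1.1 (hmem a ha) (hab ▸ hmem b hb) hne))

end IsAsteroidal

end

/-- If `G` has an asteroidal set of size `k`, then it has an asteroidal set of size `k`
all of whose vertices are moplicial; consequently the asteroidal number is at most the
number of moplexes. -/
theorem asteroidal_set_of_moplicial {V : Type*} [Fintype V] (G : SimpleGraph V)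
    (A : Set V) (k : ℕ) (hA : IsAsteroidal G A) (hk : A.ncard = k) :
    (∃ A' : Set V, IsAsteroidal G A' ∧ A'.ncard = k ∧ ∀ a ∈ A', Moplicial G a) ∧
      k ≤ {X : Set V | IsMoplex G X}.ncard := by
  subst hk
  obtain ⟨A', hA', hcard, hmop⟩ := hA.exists_forall_moplicial
  exact ⟨⟨A', hA', hcard, hmop⟩, hcard ▸ hA'.ncard_le_ncard_isMoplex hmop⟩

end MoplexPaper
end

section
/- In a connected proper interval graph, given a proper interval representation with vertices v_1,…,v_n ordered by left endpoints of their intervals, no vertex v_j with 1 < j < n forms a moplex of size one; in particular, if no two vertices have equal closed neighbourhoods, the graph has at most two moplexes. -/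
open SimpleGraph

namespace MoplexPaper

variable {V : Type*}

lemma crossing {G : SimpleGraph V} {P : V → Prop} :
    ∀ {u v : V} (p : G.Walk u v), P u → ¬ P v →
      ∃ a b, G.Adj a b ∧ P a ∧ ¬ P b ∧ a ∈ p.support ∧ b ∈ p.support := by
  intro u v p
  induction p with
  | nil => intro h h'; exact absurd h h'
  | @cons u x v h q ih =>
    intro hu hv
    by_cases hx : P x
    · obtain ⟨a, b, h1, h2, h3, h4, h5⟩ := ih hx hv
      exact ⟨a, b, h1, h2, h3, by simp [Walk.support_cons, h4], by simp [Walk.support_cons, h5]⟩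
    · exact ⟨u, x, h, hu, hx, by simp, by simp [Walk.support_cons]⟩

lemma walkSeg {n : ℕ} {G : SimpleGraph (Fin n)}
    (hcons : ∀ i : Fin n, ∀ h : (i : ℕ) + 1 < n, G.Adj i ⟨(i : ℕ) + 1, h⟩) :
    ∀ d : ℕ, ∀ a b : Fin n, (b : ℕ) = (a : ℕ) + d →
      ∃ p : G.Walk a b, ∀ x ∈ p.support, a ≤ x ∧ x ≤ b := by
  intro d
  induction d with
  | zero =>
    intro a b h
    have : a = b := Fin.ext (by omega)
    subst this
    exact ⟨Walk.nil, by simp⟩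
  | succ d ih =>
    intro a b h
    have h1 : (a : ℕ) + 1 < n := by have := b.isLt; omega
    obtain ⟨p, hp⟩ := ih ⟨(a : ℕ) + 1, h1⟩ b (by simp; omega)
    refine ⟨Walk.cons (hcons a h1) p, ?_⟩
    intro x hx
    rcases (by simpa [Walk.support_cons] using hx : x = a ∨ x ∈ p.support) with rfl | hx'
    · exact ⟨le_refl _, by rw [Fin.le_def]; omega⟩
    · obtain ⟨h2, h3⟩ := hp x hx'
      refine ⟨?_, h3⟩
      rw [Fin.le_def] at h2 ⊢
      simp at h2
      omega


/-- In a connected proper interval graph with intervals ordered by left endpoints,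
no vertex other than the first and the last forms a moplex of size one; in particular,
if closed neighbourhoods are distinct, the graph has at most two moplexes. -/
theorem properInterval_inner_not_moplex (n : ℕ) (hn : 0 < n)
    (G : SimpleGraph (Fin n)) (hconn : G.Connected)
    (l r : Fin n → ℝ) (hlr : ∀ v, l v ≤ r v)
    (hadj : ∀ u v, u ≠ v → (G.Adj u v ↔ l u ≤ r v ∧ l v ≤ r u))
    (hproper : ∀ u v, l u ≤ l v → r u ≤ r v)
    (hord : Monotone l) :
    (∀ j : Fin n, (j : ℕ) ≠ 0 → (j : ℕ) + 1 ≠ n → ¬ IsMoplex G {j}) ∧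
    ((∀ a b : Fin n, closedNbhd G a = closedNbhd G b → a = b) →
      {X : Set (Fin n) | IsMoplex G X}.ncard ≤ 2) := by
  have hr : ∀ a b : Fin n, a ≤ b → r a ≤ r b := fun a b h => hproper a b (hord h)
  -- consecutive vertices are adjacent
  have hcons : ∀ i : Fin n, ∀ h : (i : ℕ) + 1 < n, G.Adj i ⟨(i : ℕ) + 1, h⟩ := by
    intro i h
    set i' : Fin n := ⟨(i : ℕ) + 1, h⟩ with hi'
    have hne : i ≠ i' := by simp [hi', Fin.ext_iff]
    have hle : l i' ≤ r i := by
      by_contra hlt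
      push_neg at hlt
      obtain ⟨p⟩ := hconn.preconnected i i'
      obtain ⟨x, y, hxy, hx, hy, -, -⟩ :=
        crossing (P := fun z : Fin n => (z : ℕ) ≤ (i : ℕ)) p (le_refl _) (by simp [hi'])
      have h1 := (hadj x y (G.ne_of_adj hxy)).mp hxy
      have h2 : l i' ≤ l y := hord (by rw [Fin.le_def]; simp [hi']; omega)
      have h3 : r x ≤ r i := hr x i (by rw [Fin.le_def]; omega)
      linarith [h1.2]
    have hle2 : l i ≤ r i' :=
      le_trans (hord (show i ≤ i' from by rw [Fin.le_def]; simp [hi'])) (hlr i')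
    exact (hadj i i' hne).mpr ⟨hle2, hle⟩
  have part1 : ∀ j : Fin n, (j : ℕ) ≠ 0 → (j : ℕ) + 1 ≠ n → ¬ IsMoplex G {j} := by
    intro j hj0 hjn hmop
    have hjp_lt : (j : ℕ) + 1 < n := lt_of_le_of_ne j.isLt hjn
    set jp : Fin n := ⟨(j : ℕ) + 1, hjp_lt⟩ with hjp
    have hjm_lt : (j : ℕ) - 1 < n := by have := j.isLt; omega
    set jm : Fin n := ⟨(j : ℕ) - 1, hjm_lt⟩ with hjm
    have hAjp : G.Adj j jp := hcons j hjp_lt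
    have hAjm : G.Adj jm j := by
      have h1 : (jm : ℕ) + 1 < n := by simp [hjm]; have := j.isLt; omega
      have h2 := hcons jm h1
      rwa [show (⟨(jm : ℕ) + 1, h1⟩ : Fin n) = j from Fin.ext (by simp [hjm]; omega)] at h2
    set S := setNbhd G {j} with hSdef
    have hS : ∀ x, x ∈ S ↔ G.Adj j x := by
      intro x
      constructor
      · rintro ⟨hx, y, hy, hA⟩
        rcases hy with rfl
        exact hA.symm
      · intro h
        exact ⟨by simp [G.ne_of_adj h.symm], j, rfl, h.symm⟩
    have hjS : j ∉ S := fun h => G.irrefl ((hS j).mp h)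
    have hjpS : jp ∈ S := (hS jp).mpr hAjp
    have hjmS : jm ∈ S := (hS jm).mpr hAjm.symm
    have hjmj : jm ≠ jp := by simp [hjm, hjp, Fin.ext_iff]
    obtain ⟨-, -, -, hsep⟩ := hmop
    rcases hsep with hemp | ⟨u, v, huv, ⟨⟨hnadj, huS, hvS, hnreach⟩, hmin⟩⟩
    · rw [← hSdef] at hemp
      rw [hemp] at hjpS
      exact hjpS
    · -- basic geometric facts
      have hLR : ∀ a b : Fin n, r a < l j → r j < l b → ¬ G.Adj a b := by
        intro a b h1 h2 hA
        have := ((hadj a b (G.ne_of_adj hA)).mp hA).2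
        linarith [hlr j]
      have hLj : ∀ a : Fin n, r a < l j → ¬ G.Adj a j := by
        intro a h1 hA
        have := ((hadj a j (G.ne_of_adj hA)).mp hA).2
        linarith
      have hRj : ∀ b : Fin n, r j < l b → ¬ G.Adj b j := by
        intro b h1 hA
        have := ((hadj b j (G.ne_of_adj hA)).mp hA).1
        linarith
      have hjlejp : j ≤ jp := by rw [Fin.le_def]; simp [hjp]
      have hjmlej : jm ≤ j := by rw [Fin.le_def]; simp [hjm]
      have hLjp : ∀ a : Fin n, r a < l j → ¬ G.Adj a jp := by
        intro a h1 hA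
        have := ((hadj a jp (G.ne_of_adj hA)).mp hA).2
        have h2 : l j ≤ l jp := hord hjlejp
        linarith
      have hRjm : ∀ b : Fin n, r j < l b → ¬ G.Adj b jm := by
        intro b h1 hA
        have := ((hadj b jm (G.ne_of_adj hA)).mp hA).1
        have h2 : r jm ≤ r j := hr jm j hjmlej
        linarith
      have classify : ∀ x : Fin n, x ∉ S → x ≠ j → r x < l j ∨ r j < l x := by
        intro x hxS hxj
        by_contra hcon
        push_neg at hcon
        exact hxS ((hS x).mpr ((hadj j x (Ne.symm hxj)).mpr ⟨hcon.1, hcon.2⟩))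
      have reach_symm : ∀ (T : Set (Fin n)) (a b : Fin n),
          ReachOutside G T a b → ReachOutside G T b a := by
        rintro T a b ⟨p, hp⟩
        exact ⟨p.reverse, fun x hx => hp x (by simpa [Walk.support_reverse] using hx)⟩
      -- removing jp from S still separates anything on the right from anything in L
      have sep1 : ∀ a b : Fin n, (r j < l a ∨ a = j ∨ a = jp) → r b < l j →
          ¬ ReachOutside G (S \ {jp}) a b := by
        rintro a b ha hb ⟨p, hp⟩
        have hnb : ¬ (r j < l b ∨ b = j ∨ b = jp) := by
          rintro (h | hbj | hbj)
          · linarith [hlr b, hlr j]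
          · rw [hbj] at hb; linarith [hlr j]
          · rw [hbj] at hb
            have h2 : l j ≤ l jp := hord hjlejp
            linarith [hlr jp]
        obtain ⟨x, y, hxy, hx, hy, -, hys⟩ :=
          crossing (P := fun z : Fin n => r j < l z ∨ z = j ∨ z = jp) p ha hnb
        have hyjp : y ≠ jp := fun h => hy (Or.inr (Or.inr h))
        have hyj : y ≠ j := fun h => hy (Or.inr (Or.inl h))
        have hyS : y ∉ S := fun h => hp y hys ⟨h, by simp [hyjp]⟩
        have hyL : r y < l j := by
          rcases classify y hyS hyj with h | h
          · exact h
          · exact (hy (Or.inl h)).elim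
        rcases hx with hxR | rfl | rfl
        · exact hLR y x hyL hxR hxy.symm
        · exact hLj y hyL hxy.symm
        · exact hLjp y hyL hxy.symm
      -- removing jm from S still separates anything on the left from anything in R
      have sep2 : ∀ a b : Fin n, (r a < l j ∨ a = j ∨ a = jm) → r j < l b →
          ¬ ReachOutside G (S \ {jm}) a b := by
        rintro a b ha hb ⟨p, hp⟩
        have hnb : ¬ (r b < l j ∨ b = j ∨ b = jm) := by
          rintro (h | hbj | hbj)
          · linarith [hlr b, hlr j]
          · rw [hbj] at hb; linarith [hlr j]
          · rw [hbj] at hb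
            have h2 : l jm ≤ l j := hord hjmlej
            linarith [hlr j]
        obtain ⟨x, y, hxy, hx, hy, -, hys⟩ :=
          crossing (P := fun z : Fin n => r z < l j ∨ z = j ∨ z = jm) p ha hnb
        have hyjm : y ≠ jm := fun h => hy (Or.inr (Or.inr h))
        have hyj : y ≠ j := fun h => hy (Or.inr (Or.inl h))
        have hyS : y ∉ S := fun h => hp y hys ⟨h, by simp [hyjm]⟩
        have hyR : r j < l y := by
          rcases classify y hyS hyj with h | h
          · exact (hy (Or.inl h)).elim
          · exact h
        rcases hx with hxL | rfl | rfl
        · exact hLR x y hxL hyR hxy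
        · exact hRj y hyR hxy.symm
        · exact hRjm y hyR hxy.symm
      have hTp : S \ {jp} ⊂ S := Set.sdiff_singleton_ssubset.mpr hjpS
      have hTm : S \ {jm} ⊂ S := Set.sdiff_singleton_ssubset.mpr hjmS
      -- two left vertices reach each other outside S, same on the right
      have segL : ∀ a b : Fin n, r a < l j → r b < l j → ReachOutside G S a b := by
        have key : ∀ a b : Fin n, a ≤ b → r b < l j → ReachOutside G S a b := by
          intro a b hab hb
          obtain ⟨p, hp⟩ := walkSeg hcons ((b : ℕ) - (a : ℕ)) a b
            (by rw [Fin.le_def] at hab; omega)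
          refine ⟨p, fun x hx hxS => ?_⟩
          have hxb : r x ≤ r b := hr x b (hp x hx).2
          exact hLj x (by linarith) ((hS x).mp hxS).symm
        intro a b ha hb
        rcases le_total a b with h | h
        · exact key a b h hb
        · exact reach_symm S b a (key b a h ha)
      have segR : ∀ a b : Fin n, r j < l a → r j < l b → ReachOutside G S a b := by
        have key : ∀ a b : Fin n, a ≤ b → r j < l a → ReachOutside G S a b := by
          intro a b hab ha
          obtain ⟨p, hp⟩ := walkSeg hcons ((b : ℕ) - (a : ℕ)) a b
            (by rw [Fin.le_def] at hab; omega)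
          refine ⟨p, fun x hx hxS => ?_⟩
          have hxa : l a ≤ l x := hord (hp x hx).1
          exact hRj x (by linarith) ((hS x).mp hxS).symm
        intro a b ha hb
        rcases le_total a b with h | h
        · exact key a b h ha
        · exact reach_symm S b a (key b a h hb)
      rcases eq_or_ne j u with rfl | hu
      · rcases eq_or_ne j v with rfl | hv
        · exact huv rfl
        · rcases classify v hvS (Ne.symm hv) with hvL | hvR
          · exact hmin _ hTp ⟨hnadj, fun h => hjS h.1, fun h => hvS h.1,
              sep1 j v (Or.inr (Or.inl rfl)) hvL⟩
          · exact hmin _ hTm ⟨hnadj, fun h => hjS h.1, fun h => hvS h.1,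
              sep2 j v (Or.inr (Or.inl rfl)) hvR⟩
      · rcases classify u huS (Ne.symm hu) with huL | huR
        · rcases eq_or_ne j v with rfl | hv
          · exact hmin _ hTp ⟨hnadj, fun h => huS h.1, fun h => hjS h.1,
              fun hR => sep1 j u (Or.inr (Or.inl rfl)) huL (reach_symm _ _ _ hR)⟩
          · rcases classify v hvS (Ne.symm hv) with hvL | hvR
            · exact hnreach (segL u v huL hvL)
            · exact hmin _ hTm ⟨hnadj, fun h => huS h.1, fun h => hvS h.1,
                sep2 u v (Or.inl huL) hvR⟩
        · rcases eq_or_ne j v with rfl | hv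
          · exact hmin _ hTm ⟨hnadj, fun h => huS h.1, fun h => hjS h.1,
              fun hR => sep2 j u (Or.inr (Or.inl rfl)) huR (reach_symm _ _ _ hR)⟩
          · rcases classify v hvS (Ne.symm hv) with hvL | hvR
            · exact hmin _ hTp ⟨hnadj, fun h => huS h.1, fun h => hvS h.1,
                sep1 u v (Or.inl huR) hvL⟩
            · exact hnreach (segR u v huR hvR)
  refine ⟨part1, fun hdist => ?_⟩
  have hn1 : n - 1 < n := by omega
  have hsub : {X : Set (Fin n) | IsMoplex G X} ⊆
      {({⟨0, hn⟩} : Set (Fin n)), ({⟨n - 1, hn1⟩} : Set (Fin n))} := by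
    intro X hX
    have hX' : IsMoplex G X := hX
    obtain ⟨a, ha⟩ := hX'.1
    obtain ⟨hclq, hmod⟩ := hX'.2.1
    have hXa : X = {a} := by
      ext b
      simp only [Set.mem_singleton_iff]
      constructor
      · intro hb
        by_contra hba
        apply hba
        apply hdist b a
        ext x
        simp only [closedNbhd, Set.mem_insert_iff, mem_neighborSet]
        by_cases hxX : x ∈ X
        · constructor
          · intro _
            rcases eq_or_ne x a with rfl | hxa
            · exact Or.inl rfl
            · exact Or.inr (hclq ha hxX (Ne.symm hxa))
          · intro _
            rcases eq_or_ne x b with rfl | hxb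
            · exact Or.inl rfl
            · exact Or.inr (hclq hb hxX (Ne.symm hxb))
        · have hxb : x ≠ b := fun h => hxX (h ▸ hb)
          have hxa : x ≠ a := fun h => hxX (h ▸ ha)
          rcases hmod x hxX with hall | hnone
          · exact iff_of_true (Or.inr (hall b hb).symm) (Or.inr (hall a ha).symm)
          · constructor
            · rintro (h | h)
              · exact absurd h hxb
              · exact absurd h.symm (hnone b hb)
            · rintro (h | h)
              · exact absurd h hxa
              · exact absurd h.symm (hnone a ha)
      · rintro rfl; exact ha
    have hXmop : IsMoplex G {a} := hXa ▸ hX'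
    by_cases h0 : (a : ℕ) = 0
    · left
      rw [hXa]
      congr 1
      exact Fin.ext (by simpa using h0)
    · by_cases hlast : (a : ℕ) + 1 = n
      · right
        rw [hXa]
        congr 1
        exact Fin.ext (by simp; omega)
      · exact absurd hXmop (part1 a h0 hlast)
  calc {X : Set (Fin n) | IsMoplex G X}.ncard
      ≤ ({({⟨0, hn⟩} : Set (Fin n)), ({⟨n - 1, hn1⟩} : Set (Fin n))} :
          Set (Set (Fin n))).ncard :=
        Set.ncard_le_ncard hsub ((Set.finite_singleton _).insert _)
    _ ≤ 2 := by
        apply le_trans (Set.ncard_insert_le _ _)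
        simp

end MoplexPaper
end
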